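/- (Theorem 4: one state separable.) Let d ≥ 1, let ρ₁, ρ₂ be density matrices on ℂ^d, let p₁, p₂ ≥ 0 with p₁ + p₂ = 1, let R₁ ≥ 0, and define σ₁ := (1+R₁)⁻¹ · (ρ₁ + (R₁/d) · I). Then ‖p₁·ρ₁ − p₂·ρ₂‖₁ − ‖p₁·σ₁ − p₂·ρ₂‖₁ ≥ (R₁/(1+R₁)) · (‖p₁·ρ₁ − p₂·ρ₂‖₁ − 1). Equivalently, the difference between the Helstrom success probability (1 + ‖p₁ρ₁ − p₂ρ₂‖₁)/2 for the pair (ρ₁, ρ₂) and the Helstrom success probability (1 + ‖p₁σ₁ − p₂ρ₂‖₁)/2 for the pair (σ₁, ρ₂) is at least (R₁/2)·(1+R₁)⁻¹·(‖p₁ρ₁ − p₂ρ₂‖₁ − 1). -/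

import Mathlib

open Matrix
open scoped ComplexOrder

/-- A density matrix: positive semidefinite with unit trace. -/
def IsDensityMatrix {n : Type*} [Fintype n] [DecidableEq n] (ρ : Matrix n n ℂ) : Prop :=
  ρ.PosSemidef ∧ ρ.trace = 1

/-- The trace norm of a complex matrix: the trace of the positive semidefinite
square root of `Aᴴ * A`. -/
noncomputable def traceNorm {n : Type*} [Fintype n] [DecidableEq n]
    (A : Matrix n n ℂ) : ℝ :=
  (((Matrix.posSemidef_conjTranspose_mul_self A).1.eigenvectorUnitary : Matrix n n ℂ) *
      diagonal (((↑) : ℝ → ℂ) ∘ Real.sqrt ∘ (Matrix.posSemidef_conjTranspose_mul_self A).1.eigenvalues) *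
      (star (Matrix.posSemidef_conjTranspose_mul_self A).1.eigenvectorUnitary : Matrix n n ℂ)).trace.re

/-!
Writing `X = p₁ρ₁ - p₂ρ₂`, the definition of `σ₁` gives the convex decomposition
`p₁σ₁ - p₂ρ₂ = (1 + R₁)⁻¹ X + (R₁ / (1 + R₁)) Y` with `Y = (p₁ / d) I - p₂ρ₂`. As a difference of
positive semidefinite matrices of traces `p₁` and `p₂`, `Y` has trace norm at most `p₁ + p₂ = 1`,
so the triangle inequality bounds `‖p₁σ₁ - p₂ρ₂‖₁` by `(1 + R₁)⁻¹ ‖X‖₁ + R₁ / (1 + R₁)`.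
-/

open scoped MatrixOrder

variable {n : Type*} [Fintype n] [DecidableEq n]

namespace Matrix

lemma IsHermitian.abs_re_conj_diag_le {m : Type*} [Fintype m] {A : Matrix n n ℂ}
    (hA : A.IsHermitian) (V : Matrix n m ℂ) (i : m) :
    |((Vᴴ * A * V) i i).re| ≤ ((Vᴴ * CFC.abs A * V) i i).re := by
  have re_diag_nonneg {P : Matrix n n ℂ} (hP : 0 ≤ P) : 0 ≤ ((Vᴴ * P * V) i i).re :=
    Complex.nonneg_iff.mp (hP.posSemidef.conjTranspose_mul_mul_same V).diag_nonneg |>.1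
  have hpos := re_diag_nonneg (CFC.posPart_nonneg A)
  have hneg := re_diag_nonneg (CFC.negPart_nonneg A)
  have hsub : Vᴴ * A * V = Vᴴ * A⁺ * V - Vᴴ * A⁻ * V := by
    rw [← Matrix.sub_mul, ← Matrix.mul_sub, CFC.posPart_sub_negPart A hA.isSelfAdjoint]
  have hadd : Vᴴ * CFC.abs A * V = Vᴴ * A⁺ * V + Vᴴ * A⁻ * V := by
    rw [← Matrix.add_mul, ← Matrix.mul_add, CFC.posPart_add_negPart A hA.isSelfAdjoint]
  rw [hsub, hadd, sub_apply, add_apply, Complex.sub_re, Complex.add_re]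
  exact abs_le.mpr ⟨by linarith, by linarith⟩

lemma IsHermitian.conjTranspose_eigenvectorUnitary_mul_cfc_mul {H : Matrix n n ℂ}
    (hH : H.IsHermitian) (f : ℝ → ℝ) :
    (hH.eigenvectorUnitary : Matrix n n ℂ)ᴴ * cfc f H * hH.eigenvectorUnitary =
      diagonal (((↑) : ℝ → ℂ) ∘ f ∘ hH.eigenvalues) := by
  rw [hH.cfc_eq, IsHermitian.cfc, Unitary.conjStarAlgAut_apply, ← star_eq_conjTranspose]
  simp only [mul_assoc, Unitary.coe_star_mul_self, mul_one]
  simp only [← mul_assoc, Unitary.coe_star_mul_self, one_mul]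
  rfl

lemma IsHermitian.re_conj_diag_cfcAbs {H : Matrix n n ℂ} (hH : H.IsHermitian) (i : n) :
    (((hH.eigenvectorUnitary : Matrix n n ℂ)ᴴ * CFC.abs H * hH.eigenvectorUnitary) i i).re =
      |(((hH.eigenvectorUnitary : Matrix n n ℂ)ᴴ * H * hH.eigenvectorUnitary) i i).re| := by
  have hdiag := hH.conjTranspose_eigenvectorUnitary_mul_cfc_mul id
  have habs := hH.conjTranspose_eigenvectorUnitary_mul_cfc_mul (‖·‖)
  rw [cfc_id ℝ H] at hdiag
  rw [← CFC.abs_eq_cfc_norm H hH.isSelfAdjoint] at habs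
  rw [hdiag, habs]
  simp

end Matrix

lemma traceNorm_eq_re_trace_cfcAbs (A : Matrix n n ℂ) : traceNorm A = (CFC.abs A).trace.re := by
  have hAA := posSemidef_conjTranspose_mul_self A
  rw [CFC.abs, star_eq_conjTranspose, CFC.sqrt_eq_real_sqrt _ hAA.nonneg, cfcₙ_eq_cfc,
    hAA.1.cfc_eq, IsHermitian.cfc, Unitary.conjStarAlgAut_apply]
  rfl

lemma traceNorm_of_posSemidef {A : Matrix n n ℂ} (hA : A.PosSemidef) :
    traceNorm A = A.trace.re := by
  rw [traceNorm_eq_re_trace_cfcAbs, CFC.abs_of_nonneg A hA.nonneg]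

lemma traceNorm_smul (c : ℝ) (A : Matrix n n ℂ) : traceNorm (c • A) = |c| * traceNorm A := by
  rw [traceNorm_eq_re_trace_cfcAbs, traceNorm_eq_re_trace_cfcAbs, CFC.abs_smul, trace_smul,
    Real.norm_eq_abs, Complex.smul_re, smul_eq_mul]

lemma traceNorm_neg (A : Matrix n n ℂ) : traceNorm (-A) = traceNorm A := by
  rw [traceNorm_eq_re_trace_cfcAbs, traceNorm_eq_re_trace_cfcAbs, CFC.abs_neg]

lemma traceNorm_eq_sum_re_conj_diag {A V : Matrix n n ℂ} (hV : V * Vᴴ = 1) :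
    traceNorm A = ∑ i, ((Vᴴ * CFC.abs A * V) i i).re := by
  have htrace : (Vᴴ * CFC.abs A * V).trace = (CFC.abs A).trace := by
    rw [trace_mul_cycle, hV, one_mul]
  rw [traceNorm_eq_re_trace_cfcAbs, ← htrace, trace, Complex.re_sum]
  rfl

/-- In an eigenbasis of `A + B` the trace norm of `A + B` is the sum of the absolute values of the
diagonal entries, and in any orthonormal basis the diagonal entries of `A = A⁺ - A⁻` are dominated
in absolute value by those of `|A| = A⁺ + A⁻`. -/
lemma traceNorm_add_le {A B : Matrix n n ℂ} (hA : A.IsHermitian) (hB : B.IsHermitian) :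
    traceNorm (A + B) ≤ traceNorm A + traceNorm B := by
  set U := (hA.add hB).eigenvectorUnitary
  have hU : (U : Matrix n n ℂ) * (U : Matrix n n ℂ)ᴴ = 1 := Unitary.coe_mul_star_self U
  calc traceNorm (A + B)
      = ∑ i, |(((U : Matrix n n ℂ)ᴴ * (A + B) * U) i i).re| := by
        simp only [traceNorm_eq_sum_re_conj_diag hU, (hA.add hB).re_conj_diag_cfcAbs, U]
    _ ≤ ∑ i, (|(((U : Matrix n n ℂ)ᴴ * A * U) i i).re| +
          |(((U : Matrix n n ℂ)ᴴ * B * U) i i).re|) := by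
        refine Finset.sum_le_sum fun i _ => ?_
        rw [mul_add, add_mul, Matrix.add_apply, Complex.add_re]
        exact abs_add_le _ _
    _ ≤ ∑ i, ((((U : Matrix n n ℂ)ᴴ * CFC.abs A * U) i i).re +
          (((U : Matrix n n ℂ)ᴴ * CFC.abs B * U) i i).re) :=
        Finset.sum_le_sum fun i _ =>
          add_le_add (hA.abs_re_conj_diag_le _ i) (hB.abs_re_conj_diag_le _ i)
    _ = traceNorm A + traceNorm B := by
        rw [Finset.sum_add_distrib, traceNorm_eq_sum_re_conj_diag hU,
          traceNorm_eq_sum_re_conj_diag hU]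

lemma traceNorm_sub_le_of_posSemidef {P N : Matrix n n ℂ} (hP : P.PosSemidef)
    (hN : N.PosSemidef) : traceNorm (P - N) ≤ P.trace.re + N.trace.re := by
  rw [sub_eq_add_neg, ← traceNorm_of_posSemidef hP, ← traceNorm_of_posSemidef hN,
    ← traceNorm_neg N]
  exact traceNorm_add_le hP.isHermitian hN.isHermitian.neg

lemma traceNorm_smul_add_smul_le {X Y : Matrix n n ℂ} (hX : X.IsHermitian) (hY : Y.IsHermitian)
    (hY₁ : traceNorm Y ≤ 1) {s t : ℝ} (hs : 0 ≤ s) (ht : 0 ≤ t) :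
    traceNorm (s • X + t • Y) ≤ s * traceNorm X + t :=
  calc traceNorm (s • X + t • Y)
      ≤ traceNorm (s • X) + traceNorm (t • Y) :=
        traceNorm_add_le (hX.smul (.all s)) (hY.smul (.all t))
    _ = s * traceNorm X + t * traceNorm Y := by
        rw [traceNorm_smul, traceNorm_smul, abs_of_nonneg hs, abs_of_nonneg ht]
    _ ≤ s * traceNorm X + t := by gcongr; exact mul_le_of_le_one_right ht hY₁

theorem stmt8 {d : ℕ} (hd : 1 ≤ d)
    (ρ₁ ρ₂ : Matrix (Fin d) (Fin d) ℂ)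
    (hρ₁ : IsDensityMatrix ρ₁) (hρ₂ : IsDensityMatrix ρ₂)
    (p₁ p₂ : ℝ) (hp₁ : 0 ≤ p₁) (hp₂ : 0 ≤ p₂) (hp : p₁ + p₂ = 1)
    (R₁ : ℝ) (hR₁ : 0 ≤ R₁)
    (σ₁ : Matrix (Fin d) (Fin d) ℂ)
    (hσ₁ : σ₁ = ((1 + R₁)⁻¹ : ℝ) • (ρ₁ + ((R₁ / d : ℝ)) • (1 : Matrix (Fin d) (Fin d) ℂ))) :
    traceNorm (p₁ • ρ₁ - p₂ • ρ₂) - traceNorm (p₁ • σ₁ - p₂ • ρ₂) ≥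
        (R₁ / (1 + R₁)) * (traceNorm (p₁ • ρ₁ - p₂ • ρ₂) - 1) ∧
      (1 + traceNorm (p₁ • ρ₁ - p₂ • ρ₂)) / 2 - (1 + traceNorm (p₁ • σ₁ - p₂ • ρ₂)) / 2 ≥
        (R₁ / 2) * (1 + R₁)⁻¹ * (traceNorm (p₁ • ρ₁ - p₂ • ρ₂) - 1) := by
  have hR : 0 < 1 + R₁ := by linarith
  have hd₀ : (d : ℝ) ≠ 0 := by exact_mod_cast Nat.one_le_iff_ne_zero.mp hd
  set X := p₁ • ρ₁ - p₂ • ρ₂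
  set Y := (p₁ / d) • (1 : Matrix (Fin d) (Fin d) ℂ) - p₂ • ρ₂
  have hX : X.IsHermitian :=
    (hρ₁.1.isHermitian.smul (.all p₁)).sub (hρ₂.1.isHermitian.smul (.all p₂))
  have hY : Y.IsHermitian :=
    (isHermitian_one.smul (.all _)).sub (hρ₂.1.isHermitian.smul (.all p₂))
  have hmix : p₁ • σ₁ - p₂ • ρ₂ = (1 + R₁)⁻¹ • X + (R₁ / (1 + R₁)) • Y := by
    rw [hσ₁]
    match_scalars <;> field_simp; ring
  have hY₁ : traceNorm Y ≤ 1 :=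
    calc traceNorm Y
        ≤ ((p₁ / d) • (1 : Matrix (Fin d) (Fin d) ℂ)).trace.re + (p₂ • ρ₂).trace.re :=
          traceNorm_sub_le_of_posSemidef
            (PosSemidef.one.smul (div_nonneg hp₁ d.cast_nonneg)) (hρ₂.1.smul hp₂)
      _ = 1 := by simp [trace_smul, hρ₂.2, hd₀, hp]
  have hσ : traceNorm (p₁ • σ₁ - p₂ • ρ₂) ≤ (1 + R₁)⁻¹ * traceNorm X + R₁ / (1 + R₁) :=
    hmix ▸ traceNorm_smul_add_smul_le hX hY hY₁ (inv_nonneg.mpr hR.le) (by positivity)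
  have hgap : traceNorm X - ((1 + R₁)⁻¹ * traceNorm X + R₁ / (1 + R₁)) =
      R₁ / (1 + R₁) * (traceNorm X - 1) := by
    field_simp
    ring
  have hhalf : R₁ / 2 * (1 + R₁)⁻¹ * (traceNorm X - 1) = R₁ / (1 + R₁) * (traceNorm X - 1) / 2 := by
    ring
  constructor <;> linarith
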